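/- arXiv:1502.07562 — 3 statements merged into one kernel-verified Lean document; each statement's English description precedes it below -/
import Mathlib

section
/- For nonnegative integers k, n with 0 ≤ n ≤ k and k - n even, the coefficient of L_n in the Legendre expansion of y^k equals binomial(k,n) · n! · sqrt(2n+1) · (k-n-1)!! / (k+n+1)!!. -/
open MeasureTheory Real Filter

/-- The `n`-th orthonormal Legendre polynomial on `[-1,1]` w.r.t. weight `1/2`,
via Rodrigues' formula. -/
noncomputable def L (n : ℕ) : ℝ → ℝ := fun y =>
  (Real.sqrt (2 * n + 1) / ((2 : ℝ) ^ n * n.factorial)) *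
    iteratedDeriv n (fun t : ℝ => (t ^ 2 - 1) ^ n) y

/-!
Rodrigues' formula writes `L n` as a multiple of the `n`-th derivative of `(y² - 1)ⁿ`, whose
derivatives of order `< n` are divisible by `y² - 1` and so vanish at `±1`. Integrating by parts
`n` times therefore moves all derivatives onto `yᵏ`, leaving `(-1)ⁿ k!/(k-n)! ∫ yᵏ⁻ⁿ (y² - 1)ⁿ`.
Each further integration by parts trades a factor `y² - 1` for `y²`, down to `∫ yᵐ = 2/(m+1)`
for even `m`.
-/

open Polynomial
open scoped Nat

theorem Polynomial.iteratedDeriv_eval {𝕜 : Type*} [NontriviallyNormedField 𝕜] (p : 𝕜[X])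
    (j : ℕ) : iteratedDeriv j (fun t => p.eval t) = fun t => (derivative^[j] p).eval t := by
  induction j with
  | zero => simp
  | succ j ih =>
    ext t
    rw [iteratedDeriv_succ, ih, Function.iterate_succ_apply', Polynomial.deriv]

theorem Polynomial.eval_iterate_derivative_pow_of_isRoot {R : Type*} [CommRing R] {p : R[X]}
    {a : R} (ha : p.IsRoot a) {n j : ℕ} (hj : j < n) :
    (derivative^[j] (p ^ n)).eval a = 0 := by
  obtain ⟨q, hq⟩ := pow_sub_dvd_iterate_derivative_pow p n j
  rw [hq, eval_mul, eval_pow, ha.eq_zero, zero_pow (Nat.sub_ne_zero_of_lt hj), zero_mul]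

theorem integral_pow_succ_mul_eval_derivative {a b : ℝ} {q : ℝ[X]} (ha : q.eval a = 0)
    (hb : q.eval b = 0) (m : ℕ) :
    ∫ y in a..b, y ^ (m + 1) * (derivative q).eval y =
      -(m + 1 : ℝ) * ∫ y in a..b, y ^ m * q.eval y := by
  have hparts := intervalIntegral.integral_mul_deriv_eq_deriv_mul (a := a) (b := b)
    (fun x _ => hasDerivAt_pow (m + 1) x) (fun x _ => q.hasDerivAt x)
    ((by fun_prop : Continuous fun x : ℝ => ((m + 1 : ℕ) : ℝ) * x ^ m).intervalIntegrable _ _)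
    (q.derivative.continuous.intervalIntegrable _ _)
  rw [hparts, ha, hb, mul_zero, mul_zero, sub_self, zero_sub, ← intervalIntegral.integral_neg,
    ← intervalIntegral.integral_const_mul]
  congr 1
  ext y
  push_cast
  ring

theorem integral_pow_mul_eval_iterate_derivative {a b : ℝ} {p : ℝ[X]} {j k : ℕ} (hjk : j ≤ k)
    (hvanish : ∀ i < j, (derivative^[i] p).eval a = 0 ∧ (derivative^[i] p).eval b = 0) :
    ∫ y in a..b, y ^ k * (derivative^[j] p).eval y =
      (-1) ^ j * (k.descFactorial j : ℝ) * ∫ y in a..b, y ^ (k - j) * p.eval y := by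
  induction j generalizing p with
  | zero => simp
  | succ j ih =>
    have hvanish' : ∀ i < j, (derivative^[i] (derivative p)).eval a = 0 ∧
        (derivative^[i] (derivative p)).eval b = 0 := fun i hi => by
      simpa only [← Function.iterate_succ_apply] using hvanish (i + 1) (by omega)
    obtain ⟨ha, hb⟩ : p.eval a = 0 ∧ p.eval b = 0 := hvanish 0 j.succ_pos
    have hkj : k - j = k - (j + 1) + 1 := by omega
    rw [Function.iterate_succ_apply, ih (by omega) hvanish', hkj,
      integral_pow_succ_mul_eval_derivative ha hb, Nat.descFactorial_succ, hkj]
    push_cast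
    ring

theorem integral_pow_mul_sq_sub_one_pow_succ (m b : ℕ) :
    (m + 1 : ℝ) * ∫ y in (-1 : ℝ)..1, y ^ m * (y ^ 2 - 1) ^ (b + 1) =
      -(2 * (b + 1) : ℝ) * ∫ y in (-1 : ℝ)..1, y ^ (m + 2) * (y ^ 2 - 1) ^ b := by
  have hparts := intervalIntegral.integral_mul_deriv_eq_deriv_mul (a := -1) (b := 1)
    (fun x _ => ((hasDerivAt_pow 2 x).sub_const 1).pow (b + 1))
    (fun x _ => hasDerivAt_pow (m + 1) x)
    (Continuous.intervalIntegrable (by fun_prop) _ _)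
    (Continuous.intervalIntegrable (by fun_prop) _ _)
  simp only [Pi.pow_apply, one_pow, neg_one_sq, sub_self, zero_pow b.succ_ne_zero, zero_mul,
    zero_sub, Nat.add_sub_cancel, ← intervalIntegral.integral_neg] at hparts
  rw [← intervalIntegral.integral_const_mul, ← intervalIntegral.integral_const_mul]
  convert hparts using 2 <;> ext x <;> push_cast <;> ring

theorem integral_pow_of_even {m : ℕ} (hm : Even m) : ∫ y in (-1 : ℝ)..1, y ^ m = 2 / (m + 1) := by
  rw [integral_pow, hm.add_one.neg_one_pow]
  ring

theorem integral_pow_mul_sq_sub_one_pow {m : ℕ} (hm : Even m) (b : ℕ) :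
    ∫ y in (-1 : ℝ)..1, y ^ m * (y ^ 2 - 1) ^ b =
      (-1) ^ b * 2 * ((m - 1)‼ : ℝ) * ((2 * b)‼ : ℝ) / ((m + 2 * b + 1)‼ : ℝ) := by
  induction b generalizing m with
  | zero =>
    simp only [pow_zero, mul_one, integral_pow_of_even hm, mul_zero, add_zero,
      Nat.doubleFactorial_add_one, Nat.doubleFactorial]
    have hpos : ((m - 1)‼ : ℝ) ≠ 0 := by positivity
    push_cast
    field_simp
  | succ b ih =>
    have hstep := integral_pow_mul_sq_sub_one_pow_succ m b
    rw [ih (hm.add even_two), show m + 2 - 1 = m + 1 by omega, Nat.doubleFactorial_add_one,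
      show m + 2 + 2 * b + 1 = m + (2 * b + 2) + 1 by ring] at hstep
    rw [mul_add_one 2 b, Nat.doubleFactorial_add_two]
    apply mul_left_cancel₀ (by positivity : (m + 1 : ℝ) ≠ 0)
    rw [hstep]
    push_cast
    field_simp
    ring

theorem L_eq_eval_iterate_derivative (n : ℕ) :
    L n = fun y => Real.sqrt (2 * n + 1) / (2 ^ n * n.factorial) *
      (derivative^[n] ((X ^ 2 - 1 : ℝ[X]) ^ n)).eval y := by
  have hpow : (fun t : ℝ => (t ^ 2 - 1) ^ n) = fun t => ((X ^ 2 - 1 : ℝ[X]) ^ n).eval t := by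
    simp
  ext y
  rw [L, hpow, iteratedDeriv_eval]

theorem legendre_inversion_coeff (k n : ℕ) (hnk : n ≤ k) (heven : Even (k - n)) :
    (∫ y in (-1 : ℝ)..1, y ^ k * L n y * (1 / 2)) =
      (k.choose n : ℝ) * (n.factorial : ℝ) * Real.sqrt (2 * n + 1) *
        (Nat.doubleFactorial (k - n - 1) : ℝ) / (Nat.doubleFactorial (k + n + 1) : ℝ) := by
  set Q : ℝ[X] := (X ^ 2 - 1) ^ n
  have hvanish : ∀ i < n, (derivative^[i] Q).eval (-1) = 0 ∧ (derivative^[i] Q).eval 1 = 0 :=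
    fun i hi => ⟨eval_iterate_derivative_pow_of_isRoot (by simp) hi,
      eval_iterate_derivative_pow_of_isRoot (by simp) hi⟩
  have hmoment : ∫ y in (-1 : ℝ)..1, y ^ k * (derivative^[n] Q).eval y =
      (-1) ^ n * k.descFactorial n *
        ((-1) ^ n * 2 * ((k - n - 1)‼ : ℝ) * ((2 * n)‼ : ℝ) / ((k + n + 1)‼ : ℝ)) := by
    rw [integral_pow_mul_eval_iterate_derivative hnk hvanish,
      show k + n + 1 = k - n + 2 * n + 1 by omega, ← integral_pow_mul_sq_sub_one_pow heven]
    simp [Q]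
  have hL : ∫ y in (-1 : ℝ)..1, y ^ k * L n y * (1 / 2) = Real.sqrt (2 * n + 1) /
      (2 ^ n * n.factorial) / 2 * ∫ y in (-1 : ℝ)..1, y ^ k * (derivative^[n] Q).eval y := by
    rw [L_eq_eval_iterate_derivative, ← intervalIntegral.integral_const_mul]
    congr 1
    ext y
    ring
  have hsign : ((-1 : ℝ) ^ n) * (-1) ^ n = 1 := by rw [← mul_pow]; norm_num
  rw [hL, hmoment, Nat.doubleFactorial_two_mul, Nat.descFactorial_eq_factorial_mul_choose]
  push_cast
  field_simp
  linear_combination (k.choose n : ℝ) * hsign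
end

section
/- In the Legendre case, ∫_{-1}^1 y^k L_l(y) L_m(y) (1/2) dy = Σ_{n=0}^k l^k_n · T(l,m,n), where l^k_n = [k-n even] · C(k,n) n! sqrt(2n+1) (k-n-1)!!/(k+n+1)!! and T(l,m,n) = ∫_{-1}^1 L_n(y) L_l(y) L_m(y) (1/2) dy. -/
open MeasureTheory Real Filter

/-!
Let `rodrigues n = D^n (X^2 - 1)^n` and `legendreOp p = ((X^2 - 1) p')'`. Differentiating
`(X^2 - 1) w' = 2n X w`, `w = (X^2 - 1)^n`, `n + 1` times shows that `rodrigues n` is an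
eigenvector of `legendreOp` for `n(n+1)`, while
`legendreOp X^k = k(k+1) X^k - k(k-1) X^(k-2)`. The coefficients satisfy
`l^k_n (k(k+1) - n(n+1)) = k(k-1) l^(k-2)_n`, so if `X^(k-2) = ∑ l^(k-2)_n L_n` then
`S = ∑ l^k_n L_n - X^k` is an eigenvector for `k(k+1)`. But `S` has degree `< k`, and the
top coefficient of `legendreOp p` is `d(d+1)` times that of `p` for `d = deg p`, so `S = 0`.
Integrating `y^k = ∑ l^k_n L_n(y)` against `L_l L_m / 2` gives the formula.
-/

open Polynomial
open scoped Nat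

namespace Polynomial

variable (R : Type*) [CommRing R]

noncomputable def rodrigues (n : ℕ) : R[X] :=
  derivative^[n] ((X ^ 2 - 1) ^ n)

variable {R}

noncomputable def legendreOp : R[X] →ₗ[R] R[X] :=
  derivative ∘ₗ LinearMap.mulLeft R (X ^ 2 - 1) ∘ₗ derivative

lemma legendreOp_apply (p : R[X]) :
    legendreOp p = derivative ((X ^ 2 - 1) * derivative p) := rfl

lemma legendreOp_C_mul (a : R) (p : R[X]) : legendreOp (C a * p) = C a * legendreOp p := by
  rw [← smul_eq_C_mul, map_smul, smul_eq_C_mul]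

lemma iterate_derivative_X_mul (g : R[X]) (m : ℕ) :
    derivative^[m + 1] (X * g) =
      X * derivative^[m + 1] g + (m + 1 : R[X]) * derivative^[m] g := by
  induction m with
  | zero =>
    simp only [zero_add, Function.iterate_one, derivative_mul, derivative_X, one_mul, Nat.cast_zero,
      Function.iterate_zero, id_eq]
    ring
  | succ m ih =>
    rw [Function.iterate_succ_apply', ih, Function.iterate_succ_apply' _ (m + 1),
      Function.iterate_succ_apply' _ m]
    simp only [derivative_add, derivative_mul, derivative_X, derivative_natCast, derivative_one,
      Nat.cast_add, Nat.cast_one]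
    ring

lemma iterate_derivative_X_sq_sub_one_mul_derivative (g : R[X]) (m : ℕ) :
    derivative^[m + 1] ((X ^ 2 - 1) * derivative g) =
      (X ^ 2 - 1) * derivative^[m + 2] g + (2 * (m + 1) : R[X]) * (X * derivative^[m + 1] g) +
        (m * (m + 1) : R[X]) * derivative^[m] g := by
  induction m with
  | zero =>
    simp only [zero_add, derivative_mul, derivative_sub, derivative_X_pow_succ,
      Nat.cast_one, map_add, map_one, pow_one, derivative_one, sub_zero, Function.iterate_succ,
      Function.comp_apply, Nat.cast_zero, mul_one, Function.iterate_zero, id_eq, zero_mul, add_zero]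
    ring
  | succ m ih =>
    rw [Function.iterate_succ_apply', ih]
    simp only [Function.iterate_succ_apply' _ (m + 2), Function.iterate_succ_apply' _ (m + 1),
      Function.iterate_succ_apply' _ m, derivative_mul, derivative_sub,
      derivative_X_pow_succ, Nat.cast_one, map_add, map_one, pow_one, derivative_one, sub_zero,
      derivative_ofNat, zero_mul, derivative_natCast, add_zero, mul_zero, derivative_X, one_mul,
      zero_add, Nat.cast_add]
    ring

lemma X_sq_sub_one_mul_derivative_pow (n : ℕ) :
    (X ^ 2 - 1 : R[X]) * derivative ((X ^ 2 - 1) ^ n) =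
      ((2 * n : ℕ) : R[X]) * (X * (X ^ 2 - 1) ^ n) := by
  cases n with
  | zero => simp
  | succ n =>
    simp only [derivative_pow, Nat.cast_add, Nat.cast_one, map_add, map_natCast, map_one,
      add_tsub_cancel_right, derivative_sub, Nat.cast_ofNat, C_ofNat, derivative_X,
      mul_one, derivative_one, sub_zero, Nat.cast_mul]
    ring

theorem legendreOp_rodrigues (n : ℕ) :
    legendreOp (rodrigues R n) = ((n * (n + 1) : ℕ) : R[X]) * rodrigues R n := by
  have h := congrArg (derivative^[n + 1]) (X_sq_sub_one_mul_derivative_pow (R := R) n)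
  rw [iterate_derivative_X_sq_sub_one_mul_derivative, iterate_derivative_natCast_mul,
    iterate_derivative_X_mul] at h
  have h0 : legendreOp (rodrigues R n) = (X ^ 2 - 1) * derivative^[n + 2] ((X ^ 2 - 1) ^ n) +
      2 * (X * derivative^[n + 1] ((X ^ 2 - 1) ^ n)) := by
    simp only [legendreOp_apply, rodrigues, Function.iterate_succ_apply']
    simp only [derivative_mul, derivative_sub, derivative_X_pow_succ, Nat.cast_one, map_add,
      map_one, pow_one, derivative_one, sub_zero]
    ring
  rw [h0, rodrigues]
  push_cast at h ⊢
  linear_combination h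

lemma coeff_legendreOp (p : R[X]) (d : ℕ) :
    (legendreOp p).coeff d =
      ((d * (d + 1) : ℕ) : R) * p.coeff d -
        (((d + 1) * (d + 2) : ℕ) : R) * p.coeff (d + 2) := by
  rw [legendreOp_apply, coeff_derivative, sub_mul, coeff_sub, one_mul, coeff_X_pow_mul',
    coeff_derivative, coeff_derivative]
  rcases d with _ | d
  · simp [mul_comm, one_add_one_eq_two]
  · simp only [le_add_iff_nonneg_left, zero_le, if_true, show d + 1 + 1 - 2 = d from rfl,
      Nat.cast_add, Nat.cast_one, Nat.cast_mul, Nat.cast_ofNat]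
    ring

lemma legendreOp_X_pow (k : ℕ) :
    legendreOp (X ^ k : R[X]) =
      ((k * (k + 1) : ℕ) : R[X]) * X ^ k - ((k * (k - 1) : ℕ) : R[X]) * X ^ (k - 2) := by
  ext d
  rw [coeff_legendreOp]
  simp only [coeff_X_pow, coeff_sub, coeff_natCast_mul]
  rcases k with _ | _ | k
  · rcases d with _ | d <;> simp
  · rcases d with _ | _ | d <;> simp
  · split_ifs <;> first | omega | (subst_vars; push_cast; ring)

theorem eq_zero_of_legendreOp_eq [IsDomain R] [CharZero R] {p : R[X]} {k : ℕ}
    (hp : ∀ j, k ≤ j → p.coeff j = 0) (h : legendreOp p = ((k * (k + 1) : ℕ) : R[X]) * p) :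
    p = 0 := by
  by_contra hne
  set d := p.natDegree
  have hlead : p.coeff d ≠ 0 := leadingCoeff_ne_zero.mpr hne
  have hdk : d < k := by
    by_contra! hkd
    exact hlead (hp d hkd)
  have hcoeff := congrArg (coeff · d) h
  simp only [coeff_legendreOp, coeff_natCast_mul,
    coeff_eq_zero_of_natDegree_lt (show p.natDegree < d + 2 by omega), mul_zero, sub_zero] at hcoeff
  have heig : d * (d + 1) = k * (k + 1) := by
    exact_mod_cast mul_right_cancel₀ hlead hcoeff
  have : d * (d + 1) < k * (k + 1) := Nat.mul_lt_mul'' hdk (by omega)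
  omega

lemma coeff_rodrigues_of_lt {n j : ℕ} (h : n < j) : (rodrigues R n).coeff j = 0 := by
  rw [rodrigues, coeff_iterate_derivative, coeff_eq_zero_of_natDegree_lt, smul_zero]
  calc ((X ^ 2 - 1 : R[X]) ^ n).natDegree ≤ n * 2 := natDegree_pow_le_of_le n (by compute_degree)
    _ < j + n := by omega

lemma coeff_rodrigues_self (n : ℕ) : (rodrigues R n).coeff n = (2 * n).descFactorial n := by
  have hmonic : ((X ^ 2 - 1 : R[X]) ^ n).coeff (n * 2) = 1 := by
    rw [coeff_pow_of_natDegree_le (by compute_degree)]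
    simp [coeff_one]
  rw [rodrigues, coeff_iterate_derivative, ← two_mul, mul_comm, hmonic, nsmul_one]

end Polynomial

lemma iteratedDeriv_eval_eq_eval_iterate_derivative {𝕜 : Type*} [NontriviallyNormedField 𝕜]
    (p : 𝕜[X]) (n : ℕ) :
    iteratedDeriv n (fun x => p.eval x) = fun x => (derivative^[n] p).eval x := by
  induction n with
  | zero => simp
  | succ n ih =>
    rw [iteratedDeriv_succ, ih]
    funext x
    rw [Function.iterate_succ_apply']
    exact Polynomial.deriv _

noncomputable def legendrePoly (n : ℕ) : ℝ[X] :=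
  C (√(2 * n + 1) / (2 ^ n * n !)) * rodrigues ℝ n

lemma eval_legendrePoly (n : ℕ) (y : ℝ) : (legendrePoly n).eval y = L n y := by
  have h : (fun t : ℝ => (t ^ 2 - 1) ^ n) = fun t => ((X ^ 2 - 1) ^ n : ℝ[X]).eval t := by
    funext t; simp
  simp [legendrePoly, L, rodrigues, h, iteratedDeriv_eval_eq_eval_iterate_derivative]

lemma legendreOp_legendrePoly (n : ℕ) :
    legendreOp (legendrePoly n) = ((n * (n + 1) : ℕ) : ℝ[X]) * legendrePoly n := by
  rw [legendrePoly, legendreOp_C_mul, legendreOp_rodrigues]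
  ring

lemma coeff_legendrePoly_of_lt {n j : ℕ} (h : n < j) : (legendrePoly n).coeff j = 0 := by
  simp [legendrePoly, coeff_rodrigues_of_lt h]

noncomputable def legendreCoeff (k n : ℕ) : ℝ :=
  if Even (k - n) then
    (k.choose n : ℝ) * (n.factorial : ℝ) * Real.sqrt (2 * n + 1) *
      (Nat.doubleFactorial (k - n - 1) : ℝ) / (Nat.doubleFactorial (k + n + 1) : ℝ)
  else 0

lemma legendreCoeff_of_lt {k n : ℕ} (h : k < n) : legendreCoeff k n = 0 := by
  simp [legendreCoeff, Nat.choose_eq_zero_of_lt h]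

lemma legendreCoeff_self_mul_coeff_legendrePoly (k : ℕ) :
    legendreCoeff k k * (legendrePoly k).coeff k = 1 := by
  have hodd : ((2 * k + 1)‼ : ℝ) * (2 ^ k * k !) = (2 * k + 1)! := by
    have := Nat.factorial_eq_mul_doubleFactorial (2 * k)
    rw [Nat.doubleFactorial_two_mul] at this
    exact_mod_cast this.symm
  have hdesc : ((2 * k).descFactorial k : ℝ) * k ! = (2 * k)! := by
    have := Nat.factorial_mul_descFactorial (show k ≤ 2 * k by omega)
    rw [show 2 * k - k = k by omega] at this
    exact_mod_cast (mul_comm _ _).trans this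
  have hfact : ((2 * k + 1)! : ℝ) = (2 * k + 1) * (2 * k)! := by
    push_cast [Nat.factorial_succ]; ring
  simp only [legendreCoeff, legendrePoly, coeff_C_mul, coeff_rodrigues_self, Nat.sub_self,
    Even.zero, if_true, Nat.choose_self, Nat.zero_sub, Nat.doubleFactorial]
  rw [show k + k + 1 = 2 * k + 1 by ring]
  push_cast
  field_simp
  rw [Real.sq_sqrt (by positivity)]
  apply mul_right_cancel₀ (Nat.cast_ne_zero.mpr k.factorial_ne_zero : (k ! : ℝ) ≠ 0)
  linear_combination (2 * (k : ℝ) + 1) * hdesc - hodd - hfact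

lemma Nat.choose_add_two_mul (n d : ℕ) :
    (n + d + 2).choose n * ((d + 2) * (d + 1)) = (n + d + 2) * (n + d + 1) * (n + d).choose n := by
  have h1 := Nat.choose_mul_succ_eq (n + d) n
  have h2 := Nat.choose_mul_succ_eq (n + d + 1) n
  rw [show n + d + 1 - n = d + 1 by omega] at h1
  rw [show n + d + 1 + 1 - n = d + 2 by omega] at h2
  nlinarith [h1, h2]

lemma legendreCoeff_add_two_mul (n d : ℕ) :
    legendreCoeff (n + d + 2) n * ((d + 2) * (2 * n + d + 3)) =
      (n + d + 2) * (n + d + 1) * legendreCoeff (n + d) n := by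
  simp only [legendreCoeff, show n + d + 2 - n = d + 2 by omega, show n + d - n = d by omega,
    Nat.even_add, even_two, iff_true]
  split_ifs with hd
  · have hchoose : ((n + d + 2).choose n : ℝ) * ((d + 2) * (d + 1)) =
        (n + d + 2) * (n + d + 1) * (n + d).choose n := by exact_mod_cast Nat.choose_add_two_mul n d
    rw [show d + 2 - 1 = d + 1 by omega, Nat.doubleFactorial_add_one,
      show n + d + 2 + n + 1 = (n + d + n + 1) + 2 by omega, Nat.doubleFactorial_add_two]
    have hpos : ((n + d + n + 1)‼ : ℝ) ≠ 0 := by positivity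
    push_cast
    field_simp
    linear_combination (2 * (n : ℝ) + d + 3) * hchoose
  · simp

lemma legendreCoeff_mul_sub (k n : ℕ) :
    legendreCoeff k n * (((k * (k + 1) : ℕ) : ℝ) - ((n * (n + 1) : ℕ) : ℝ)) =
      ((k * (k - 1) : ℕ) : ℝ) * legendreCoeff (k - 2) n := by
  rcases lt_or_ge k (n + 2) with hk | hk
  · have hright : ((k * (k - 1) : ℕ) : ℝ) * legendreCoeff (k - 2) n = 0 := by
      rcases lt_or_ge k 2 with hk2 | hk2
      · interval_cases k <;> simp
      · rw [legendreCoeff_of_lt (by omega), mul_zero]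
    rw [hright]
    rcases lt_trichotomy n k with hnk | rfl | hnk
    · simp [legendreCoeff, show k - n = 1 by omega]
    · rw [sub_self, mul_zero]
    · rw [legendreCoeff_of_lt hnk, zero_mul]
  · obtain ⟨d, rfl⟩ : ∃ d, k = n + d + 2 := ⟨k - n - 2, by omega⟩
    rw [show n + d + 2 - 2 = n + d by omega]
    push_cast
    linear_combination legendreCoeff_add_two_mul n d

theorem X_pow_eq_sum_legendreCoeff_mul_legendrePoly (k : ℕ) :
    (X ^ k : ℝ[X]) = ∑ n ∈ Finset.range (k + 1), C (legendreCoeff k n) * legendrePoly n := by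
  induction k using Nat.strong_induction_on with
  | _ k ih =>
  rw [eq_comm, ← sub_eq_zero]
  apply eq_zero_of_legendreOp_eq (k := k)
  · intro j hj
    have hlower : ∀ n ∈ Finset.range (k + 1), n ≠ k →
        (C (legendreCoeff k n) * legendrePoly n).coeff j = 0 := fun n hn hne => by
      rw [coeff_C_mul, coeff_legendrePoly_of_lt (by simp at hn; omega), mul_zero]
    rw [coeff_sub, finsetSum_coeff, Finset.sum_eq_single k hlower (by simp), coeff_C_mul,
      coeff_X_pow]
    rcases hj.eq_or_lt with rfl | hkj
    · rw [legendreCoeff_self_mul_coeff_legendrePoly, if_pos rfl, sub_self]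
    · rw [coeff_legendrePoly_of_lt hkj, if_neg hkj.ne', mul_zero, sub_zero]
  · have hgap : ∀ n, C (legendreCoeff k n) *
        (((k * (k + 1) : ℕ) : ℝ[X]) - ((n * (n + 1) : ℕ) : ℝ[X])) =
          ((k * (k - 1) : ℕ) : ℝ[X]) * C (legendreCoeff (k - 2) n) := fun n => by
      simpa only [map_mul, map_sub, map_natCast] using congrArg C (legendreCoeff_mul_sub k n)
    have hprev : ((k * (k - 1) : ℕ) : ℝ[X]) *
        ∑ n ∈ Finset.range (k + 1), C (legendreCoeff (k - 2) n) * legendrePoly n =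
        ((k * (k - 1) : ℕ) : ℝ[X]) * X ^ (k - 2) := by
      rcases lt_or_ge k 2 with hk | hk
      · interval_cases k <;> simp
      · obtain ⟨j, rfl⟩ : ∃ j, k = j + 2 := ⟨k - 2, by omega⟩
        rw [Finset.sum_range_succ, Finset.sum_range_succ, show j + 2 - 2 = j from rfl,
          legendreCoeff_of_lt (by omega), legendreCoeff_of_lt (by omega), ← ih j (by omega)]
        simp
    simp only [map_sub, map_sum, legendreOp_X_pow, legendreOp_C_mul, legendreOp_legendrePoly]
    rw [← hprev, mul_sub, Finset.mul_sum, Finset.mul_sum]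
    simp only [← mul_assoc, ← hgap]
    rw [sub_sub_eq_add_sub, ← Finset.sum_add_distrib]
    congr 1
    exact Finset.sum_congr rfl fun n _ => by ring

lemma pow_eq_sum_legendreCoeff_mul_L (k : ℕ) (y : ℝ) :
    y ^ k = ∑ n ∈ Finset.range (k + 1), legendreCoeff k n * L n y := by
  simpa [eval_finsetSum, eval_legendrePoly] using
    congrArg (eval y) (X_pow_eq_sum_legendreCoeff_mul_legendrePoly k)

@[fun_prop]
lemma continuous_L (n : ℕ) : Continuous (L n) := by
  rw [show L n = fun y => (legendrePoly n).eval y from funext fun y => (eval_legendrePoly n y).symm]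
  exact (legendrePoly n).continuous

theorem legendre_Kk_formula (k l m : ℕ) :
    (∫ y in (-1 : ℝ)..1, y ^ k * L l y * L m y * (1 / 2)) =
      ∑ n ∈ Finset.range (k + 1),
        (if Even (k - n) then
          (k.choose n : ℝ) * (n.factorial : ℝ) * Real.sqrt (2 * n + 1) *
            (Nat.doubleFactorial (k - n - 1) : ℝ) / (Nat.doubleFactorial (k + n + 1) : ℝ)
        else 0) *
        (∫ y in (-1 : ℝ)..1, L n y * L l y * L m y * (1 / 2)) := by
  calc (∫ y in (-1 : ℝ)..1, y ^ k * L l y * L m y * (1 / 2))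
      = ∫ y in (-1 : ℝ)..1, ∑ n ∈ Finset.range (k + 1),
          legendreCoeff k n * (L n y * L l y * L m y * (1 / 2)) := by
        congr 1 with y
        rw [pow_eq_sum_legendreCoeff_mul_L, Finset.sum_mul, Finset.sum_mul, Finset.sum_mul]
        exact Finset.sum_congr rfl fun n _ => by ring
    _ = ∑ n ∈ Finset.range (k + 1), legendreCoeff k n *
          ∫ y in (-1 : ℝ)..1, L n y * L l y * L m y * (1 / 2) := by
        rw [intervalIntegral.integral_finsetSum fun n _ =>
          (by fun_prop : Continuous _).intervalIntegrable _ _]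
        simp only [intervalIntegral.integral_const_mul]
end

section
/- Let μ ∈ c₀, i.e., a nonincreasing sequence of reals in [0,1) tending to 0, with ε ∈ (0,1]. Then the threshold set TS(μ,ε) = {α ∈ (ℕ₀^∞)_c : Π_m μ_m^{α_m} ≥ ε} is finite. -/
open MeasureTheory Real Filter

theorem TS_finite (μ : ℕ → ℝ) (h0 : ∀ m, 0 ≤ μ m) (h1 : μ 0 < 1)
    (hmono : Antitone μ) (hlim : Tendsto μ atTop (nhds 0))
    (ε : ℝ) (hε : 0 < ε) (hε1 : ε ≤ 1) :
    {α : ℕ →₀ ℕ | ε ≤ α.prod fun m k => μ m ^ k}.Finite := by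
  have hle1 : ∀ m, μ m ≤ 1 := fun m => le_trans (hmono (Nat.zero_le m)) h1.le
  obtain ⟨N, hN⟩ : ∃ n : ℕ, μ 0 ^ n < ε := exists_pow_lt_of_lt_one hε h1
  obtain ⟨M, hM⟩ : ∃ M, ∀ m ≥ M, μ m < ε :=
    eventually_atTop.mp (hlim.eventually (gt_mem_nhds hε))
  set β : ℕ →₀ ℕ := Finsupp.indicator (Finset.range M) (fun _ _ => N) with hβ
  apply Set.Finite.subset (Set.finite_Iic β)
  intro α hα
  simp only [Set.mem_setOf_eq] at hα
  -- each factor is at least ε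
  have key : ∀ m, ε ≤ μ m ^ α m := by
    intro m
    by_cases hm : m ∈ α.support
    · have hrest : ∏ i ∈ α.support.erase m, μ i ^ α i ≤ 1 :=
        Finset.prod_le_one (fun i _ => pow_nonneg (h0 i) _)
          (fun i _ => pow_le_one₀ (h0 i) (hle1 i))
      have := Finset.mul_prod_erase α.support (fun i => μ i ^ α i) hm
      calc ε ≤ α.prod fun m k => μ m ^ k := hα
        _ = μ m ^ α m * ∏ i ∈ α.support.erase m, μ i ^ α i := by
              rw [Finsupp.prod, ← this]
        _ ≤ μ m ^ α m * 1 :=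
              mul_le_mul_of_nonneg_left hrest (pow_nonneg (h0 m) _)
        _ = μ m ^ α m := mul_one _
    · have : α m = 0 := Finsupp.notMem_support_iff.mp hm
      simpa [this] using hε1
  rw [Set.mem_Iic, Finsupp.le_def]
  intro i
  by_cases hi : i < M
  · have hβi : β i = N := by simp [hβ, Finsupp.indicator_apply, hi]
    rw [hβi]
    by_contra h
    push_neg at h
    have h2 : μ i ^ α i ≤ μ 0 ^ α i := pow_le_pow_left₀ (h0 i) (hmono (Nat.zero_le i)) _
    have h3 : μ 0 ^ α i ≤ μ 0 ^ N := pow_le_pow_of_le_one (h0 0) h1.le h.le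
    exact absurd (key i) (not_le.mpr (lt_of_le_of_lt (h2.trans h3) hN))
  · have hβi : β i = 0 := by simp [hβ, Finsupp.indicator_apply, hi]
    rw [hβi, Nat.le_zero]
    by_contra h
    have h1i : 1 ≤ α i := Nat.one_le_iff_ne_zero.mpr h
    have h2 : μ i ^ α i ≤ μ i ^ 1 := pow_le_pow_of_le_one (h0 i) (hle1 i) h1i
    rw [pow_one] at h2
    exact absurd (key i) (not_le.mpr (lt_of_le_of_lt h2 (hM i (not_lt.mp hi))))
end
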